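/- Every classical propositional tautology becomes intuitionistically valid under double negation in Kripke semantics: if φ is a propositional formula built only from variables, ⊥, ∧ and →, and φ is true under every boolean valuation, then ¬¬φ is forced at every world of every Kripke model. -/
import Mathlib

/-- Propositional formulas built from variables, ⊥, ∧ and →. -/
inductive PropForm : Type
  | var : ℕ → PropForm
  | bot : PropForm
  | and : PropForm → PropForm → PropForm
  | imp : PropForm → PropForm → PropForm

/-- Classical boolean evaluation. -/
def Eval (v : ℕ → Bool) : PropForm → Bool
  | .var p => v p
  | .bot => false
  | .and φ ψ => Eval v φ && Eval v ψ
  | .imp φ ψ => !Eval v φ || Eval v ψ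

/-- Kripke forcing over worlds `W` with accessibility `r` and valuation `V`. -/
def Forces {W : Type*} (r : W → W → Prop) (V : W → ℕ → Prop) : W → PropForm → Prop
  | w, .var p => V w p
  | _, .bot => False
  | w, .and φ ψ => Forces r V w φ ∧ Forces r V w ψ
  | w, .imp φ ψ => ∀ v, r w v → Forces r V v φ → Forces r V v ψ

/-- Negation: ¬φ := φ → ⊥. -/
def PropForm.neg (φ : PropForm) : PropForm := .imp φ .bot

section Aux

variable {W : Type} (r : W → W → Prop) (V : W → ℕ → Prop)

/-- variables occurring in a formula -/
def PropForm.vars : PropForm → List ℕ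
  | .var p => [p]
  | .bot => []
  | .and φ ψ => φ.vars ++ ψ.vars
  | .imp φ ψ => φ.vars ++ ψ.vars

lemma forces_mono (ht : Transitive r) (hV : ∀ w v p, r w v → V w p → V v p)
    (φ : PropForm) : ∀ w v, r w v → Forces r V w φ → Forces r V v φ := by
  induction φ with
  | var p => intro w v hwv h; exact hV _ _ _ hwv h
  | bot => intro w v _ h; exact h.elim
  | and φ ψ ihφ ihψ =>
    intro w v hwv h
    exact ⟨ihφ _ _ hwv h.1, ihψ _ _ hwv h.2⟩
  | imp φ ψ ihφ ihψ =>
    intro w v hwv h u hvu hu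
    exact h u (ht hwv hvu) hu

/-- decide all variables in a list by moving to a larger world -/
lemma decide_vars (hr : Reflexive r) (ht : Transitive r)
    (hV : ∀ w v p, r w v → V w p → V v p) (L : List ℕ) :
    ∀ w : W, ∃ u, r w u ∧ ∀ p ∈ L,
      Forces r V u (PropForm.var p).neg.neg ∨ Forces r V u (PropForm.var p).neg := by
  induction L with
  | nil => intro w; exact ⟨w, hr w, by simp⟩
  | cons p L ih =>
    intro w
    by_cases h : Forces r V w (PropForm.var p).neg.neg
    · obtain ⟨u, hwu, hu⟩ := ih w
      refine ⟨u, hwu, ?_⟩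
      intro q hq
      rcases List.mem_cons.mp hq with rfl | hq
      · exact Or.inl (forces_mono r V ht hV _ _ _ hwu h)
      · exact hu q hq
    · -- ¬ Forces w ¬¬p means ∃ t ≥ w, Forces t ¬p
      have : ∃ t, r w t ∧ Forces r V t (PropForm.var p).neg := by
        by_contra hc
        push_neg at hc
        exact h (fun t hwt hnt => (hc t hwt hnt).elim)
      obtain ⟨t, hwt, hnt⟩ := this
      obtain ⟨u, htu, hu⟩ := ih t
      refine ⟨u, ht hwt htu, ?_⟩
      intro q hq
      rcases List.mem_cons.mp hq with rfl | hq
      · exact Or.inr (forces_mono r V ht hV _ _ _ htu hnt)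
      · exact hu q hq

lemma main_lemma (hr : Reflexive r) (ht : Transitive r)
    (hV : ∀ w v p, r w v → V w p → V v p) (b : ℕ → Bool) (ψ : PropForm) :
    ∀ u : W,
      (∀ p ∈ ψ.vars, (b p = true → Forces r V u (PropForm.var p).neg.neg) ∧
        (b p = false → Forces r V u (PropForm.var p).neg)) →
      (Eval b ψ = true → Forces r V u ψ.neg.neg) ∧
        (Eval b ψ = false → Forces r V u ψ.neg) := by
  have mono := forces_mono r V ht hV
  induction ψ with
  | var p =>
    intro u hdec
    have := hdec p (by simp [PropForm.vars])
    exact ⟨this.1, this.2⟩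
  | bot =>
    intro u hdec
    constructor
    · intro h; simp [Eval] at h
    · intro _ t hut hbot; exact hbot
  | and ψ χ ihψ ihχ =>
    intro u hdec
    have hdψ : ∀ p ∈ ψ.vars, _ := fun p hp => hdec p (by simp [PropForm.vars, hp])
    have hdχ : ∀ p ∈ χ.vars, _ := fun p hp => hdec p (by simp [PropForm.vars, hp])
    have Hψ := ihψ u hdψ
    have Hχ := ihχ u hdχ
    constructor
    · intro h
      simp only [Eval, Bool.and_eq_true] at h
      have h1 := Hψ.1 h.1
      have h2 := Hχ.1 h.2
      -- show u ⊩ ¬¬(ψ ∧ χ)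
      intro s hus hns
      -- hns : s ⊩ ¬(ψ ∧ χ)
      have h1s := mono _ _ _ hus h1
      have h2s := mono _ _ _ hus h2
      -- s ⊩ ¬ψ: for s' ≥ s with s' ⊩ ψ, derive s' ⊩ ¬χ contradicting ¬¬χ
      refine h1s s (hr s) ?_
      intro s' hss' hψs'
      have h2s' := mono _ _ _ hss' h2s
      refine h2s' s' (hr s') ?_
      intro s'' hs's'' hχs''
      have hψs'' := mono _ _ _ hs's'' hψs'
      exact hns s'' (ht hss' hs's'') ⟨hψs'', hχs''⟩
    · intro h
      simp only [Eval, Bool.and_eq_false_iff] at h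
      rcases h with h | h
      · have h1 := Hψ.2 h
        intro s hus hs
        exact h1 s hus hs.1
      · have h2 := Hχ.2 h
        intro s hus hs
        exact h2 s hus hs.2
  | imp ψ χ ihψ ihχ =>
    intro u hdec
    have hdψ : ∀ p ∈ ψ.vars, _ := fun p hp => hdec p (by simp [PropForm.vars, hp])
    have hdχ : ∀ p ∈ χ.vars, _ := fun p hp => hdec p (by simp [PropForm.vars, hp])
    have Hψ := ihψ u hdψ
    have Hχ := ihχ u hdχ
    constructor
    · intro h
      simp only [Eval, Bool.or_eq_true, Bool.not_eq_true'] at h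
      rcases h with h | h
      · -- Eval ψ = false, so u ⊩ ¬ψ; then ¬¬(ψ→χ)
        have h1 := Hψ.2 h
        intro s hus hns
        refine hns s (hr s) ?_
        intro s' hss' hψs'
        exact ((mono _ _ _ (ht hus hss') h1) s' (hr s') hψs').elim
      · -- Eval χ = true, so u ⊩ ¬¬χ
        have h2 := Hχ.1 h
        intro s hus hns
        refine (mono _ _ _ hus h2) s (hr s) ?_
        intro s' hss' hχs'
        refine hns s' hss' ?_
        intro s'' hs's'' _
        exact mono _ _ _ hs's'' hχs'
    · intro h
      simp only [Eval, Bool.or_eq_false_iff, Bool.not_eq_false'] at h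
      have h1 := Hψ.1 h.1
      have h2 := Hχ.2 h.2
      -- u ⊩ ¬(ψ → χ)
      intro s hus hs
      -- hs : s ⊩ ψ → χ
      refine (mono _ _ _ hus h1) s (hr s) ?_
      intro s' hss' hψs'
      have hχs' := (mono _ _ _ hss' hs) s' (hr s') hψs'
      exact (mono _ _ _ (ht hus hss') h2) s' (hr s') hχs'

end Aux

theorem stmt_19 (φ : PropForm) (htaut : ∀ v : ℕ → Bool, Eval v φ = true) :
    ∀ (W : Type) (r : W → W → Prop), Reflexive r → Transitive r →
      ∀ V : W → ℕ → Prop, (∀ w v p, r w v → V w p → V v p) →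
        ∀ w : W, Forces r V w φ.neg.neg := by
  intro W r hr ht V hV w
  intro v hwv hnφ
  -- hnφ : v ⊩ ¬φ
  obtain ⟨u, hvu, hu⟩ := decide_vars r V hr ht hV φ.vars v
  classical
  set b : ℕ → Bool := fun p => decide (Forces r V u (PropForm.var p).neg.neg) with hb
  have hdec : ∀ p ∈ φ.vars, (b p = true → Forces r V u (PropForm.var p).neg.neg) ∧
      (b p = false → Forces r V u (PropForm.var p).neg) := by
    intro p hp
    constructor
    · intro hbp; exact of_decide_eq_true hbp
    · intro hbp
      rcases hu p hp with h | h
      · exact absurd (decide_eq_true h) (by simp [hb] at hbp ⊢; exact hbp)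
      · exact h
  have H := (main_lemma r V hr ht hV b φ u hdec).1 (htaut b)
  have hnφu := forces_mono r V ht hV φ.neg v u hvu hnφ
  exact H u (hr u) hnφu
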